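/- Let G be the directed path of length ℓ with a loop on the last vertex, i.e., vertices v_0, v_1, …, v_ℓ, edges (v_i, v_{i+1}) for 0 ≤ i < ℓ, and the loop (v_ℓ, v_ℓ). Then the associative spectrum of the graph algebra A(G) satisfies s_n(A(G)) = t_ℓ(n) for all n, where t_h(n) denotes the number of DFS trees of size n of height at most h. -/

import Mathlib

/-
The path with a loop at its end is the functional graph of the saturating successor
`σ = Order.succ` on `Fin (ℓ + 1)`. In the graph algebra of a functional graph, a bracketing `t`
evaluates to `v` exactly when its `i`-th argument is `σ^[dᵢ] v` for every `i`, where `dᵢ` is the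
depth of `xᵢ` in the DFS tree `G(t)`, and to `∞` otherwise. Hence two bracketings induce the same
term operation iff their depth sequences agree after capping at `ℓ`. The depth sequences of
bracketings are exactly the zag sequences, and capping at `ℓ ≥ 1` maps them onto the zag sequences
bounded by `ℓ`. On the other side, a DFS tree is determined by its depth sequence (the parent of a
vertex is the last earlier vertex of smaller depth) and every zag sequence arises, so `t_ℓ(n)`
counts the same zag sequences.
-/

namespace AssocSpec

/-- Bracketings of products `x₁ x₂ ⋯ xₙ` represented as binary trees whose
leaves, read from left to right, are the variables `x₁, …, xₙ`. -/
inductive BTree : Type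
  | leaf : BTree
  | node : BTree → BTree → BTree

namespace BTree

/-- The size of a bracketing: its number of variables (leaves). -/
def size : BTree → ℕ
  | leaf => 1
  | node l r => l.size + r.size

/-- Evaluate a bracketing in a magma `(A, op)`, the leaves taking the values
`f k, f (k+1), …` from left to right. -/
def evalFrom {A : Type*} (op : A → A → A) : BTree → (ℕ → A) → ℕ → A
  | leaf, f, k => f k
  | node l r, f, k => op (evalFrom op l f k) (evalFrom op r f (k + l.size))

/-- The term operation induced by a bracketing `t` on a magma `(A, op)`;
the `i`-th variable (0-indexed) takes the value `f i`. -/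
def termOp {A : Type*} (op : A → A → A) (t : BTree) (f : ℕ → A) : A :=
  evalFrom op t f 0

/-- The depth sequence of the DFS tree `G(t)` of a bracketing `t`: the `i`-th
entry is the depth of the `i`-th variable (0-indexed) in `G(t)`. -/
def depths : BTree → List ℕ
  | leaf => [0]
  | node l r => l.depths ++ r.depths.map (· + 1)

/-- The depth of the `i`-th variable (0-indexed) in the DFS tree `G(t)`. -/
def depth (t : BTree) (i : ℕ) : ℕ := t.depths.getD i 0

/-- The height of the DFS tree `G(t)`: the maximum depth of a variable. -/
def height (t : BTree) : ℕ := t.depths.foldr max 0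

/-- The edges of the DFS tree `G(t)`, the variables being indexed from the
given offset: `(p, c)` is an edge iff `x_p` is the parent of `x_c`. -/
def edgesFrom : BTree → ℕ → List (ℕ × ℕ)
  | leaf, _ => []
  | node l r, k => (k, k + l.size) :: (l.edgesFrom k ++ r.edgesFrom (k + l.size))

/-- The edges of the DFS tree `G(t)` (variables indexed from `0`). -/
def edges (t : BTree) : List (ℕ × ℕ) := t.edgesFrom 0

end BTree

open Classical in
/-- The operation of the graph algebra of the digraph with vertex set `V` and
edge relation `E`; `none` plays the role of `∞`. -/
noncomputable def gaOp {V : Type*} (E : V → V → Prop) :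
    Option V → Option V → Option V
  | some x, some y => if E x y then some x else none
  | _, _ => none

/-- The magma `(A, op)` satisfies the bracketing identity `t ≈ t'`. -/
def Satisfies {A : Type*} (op : A → A → A) (t t' : BTree) : Prop :=
  ∀ f : ℕ → A, BTree.termOp op t f = BTree.termOp op t' f

/-- The `n`-th member `s_n` of the associative spectrum of the magma `(A, op)`:
the number of distinct term operations induced by bracketings of size `n`. -/
noncomputable def spectrum {A : Type*} (op : A → A → A) (n : ℕ) : ℕ :=
  Set.ncard {g : (ℕ → A) → A | ∃ t : BTree, t.size = n ∧ g = BTree.termOp op t}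

/-- Reachability (by a walk) in the digraph with edge relation `E`. -/
def Reach {V : Type*} (E : V → V → Prop) : V → V → Prop :=
  Relation.ReflTransGen E

/-- `u` and `v` lie in the same strongly connected component. -/
def SameSCC {V : Type*} (E : V → V → Prop) (u v : V) : Prop :=
  Reach E u v ∧ Reach E v u

/-- The strongly connected component of `v`, as a set of vertices. -/
def scc {V : Type*} (E : V → V → Prop) (v : V) : Set V :=
  {u | SameSCC E u v}

/-- `v` lies in a nontrivial strongly connected component (one carrying at
least one edge), i.e. `v` lies on a closed walk of positive length. -/
def InNontrivialSCC {V : Type*} (E : V → V → Prop) (v : V) : Prop :=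
  ∃ u, E v u ∧ Reach E u v

/-- The induced subgraph on the set `K` (with the edge relation `E`) is an
`m`-whirl: `K` is partitioned into blocks `B 0, …, B (m-1)` so that edges go
exactly from each block to the cyclically next one. -/
def IsWhirlOn {V : Type*} (E : V → V → Prop) (K : Set V) (m : ℕ) : Prop :=
  ∃ B : ZMod m → Set V,
    (∀ i, (B i).Nonempty) ∧
    (∀ i, B i ⊆ K) ∧
    (∀ x ∈ K, ∃! i, x ∈ B i) ∧
    (∀ x ∈ K, ∀ y ∈ K, (E x y ↔ ∃ i, x ∈ B i ∧ y ∈ B (i + 1)))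

/-- `p 0 → p 1 → ⋯ → p len` is a path (a walk with pairwise distinct
vertices) in the digraph with edge relation `E`. -/
def IsPath {V : Type*} (E : V → V → Prop) (len : ℕ) (p : ℕ → V) : Prop :=
  (∀ i < len, E (p i) (p (i + 1))) ∧
  (∀ i ≤ len, ∀ j ≤ len, p i = p j → i = j)

/-- The walk `p 0 → ⋯ → p len` is pleasant: all its vertices belong to
trivial strongly connected components. -/
def IsPleasant {V : Type*} (E : V → V → Prop) (len : ℕ) (p : ℕ → V) : Prop :=
  ∀ i ≤ len, ¬ InNontrivialSCC E (p i)

/-- The connected component `K` (of an undirected graph) is complete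
bipartite: it splits into two nonempty parts with edges exactly between
vertices of different parts. -/
def IsCompleteBipartiteOn {V : Type*} (E : V → V → Prop) (K : Set V) : Prop :=
  ∃ B1 B2 : Set V, B1.Nonempty ∧ B2.Nonempty ∧ B1 ∪ B2 = K ∧ B1 ∩ B2 = ∅ ∧
    ∀ x ∈ K, ∀ y ∈ K, (E x y ↔ (x ∈ B1 ∧ y ∈ B2) ∨ (x ∈ B2 ∧ y ∈ B1))

/-- A DFS tree of size `n`: a rooted directed tree on the vertices
`x₁, …, xₙ` (here `Fin n`, the root being `0`), given by its parent function,
such that the parent of every non-root vertex precedes it and the vertex set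
of the induced subtree rooted at any vertex `i` is an interval `[i, i']`.
(The parent of the root is, by convention, the root itself.) -/
structure DFSTree (n : ℕ) where
  parent : Fin n → Fin n
  parent_lt : ∀ i : Fin n, 0 < (i : ℕ) → (parent i : ℕ) < (i : ℕ)
  parent_root : ∀ i : Fin n, (i : ℕ) = 0 → parent i = i
  interval : ∀ i j k : Fin n, i ≤ j → j ≤ k →
    (∃ a : ℕ, parent^[a] k = i) → (∃ a : ℕ, parent^[a] j = i)

/-- The depth of the vertex `i` in a DFS tree: the length of the path from
the root to `i`. -/
noncomputable def DFSTree.depth {n : ℕ} (T : DFSTree n) (i : Fin n) : ℕ :=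
  sInf {k : ℕ | (T.parent^[k] i : ℕ) = 0}

/-- The height of a DFS tree: the maximum depth of a vertex. -/
noncomputable def DFSTree.height {n : ℕ} (T : DFSTree n) : ℕ :=
  Finset.univ.sup fun i => T.depth i

/-- The vertex `i` is a leaf (childless vertex) of the DFS tree `T`. -/
def DFSTree.IsLeaf {n : ℕ} (T : DFSTree n) (i : Fin n) : Prop :=
  ∀ j : Fin n, T.parent j = i → j = i

/-- `t_h(n)`: the number of DFS trees of size `n` of height at most `h`. -/
noncomputable def tcount (h n : ℕ) : ℕ :=
  Nat.card {T : DFSTree n // T.height ≤ h}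

/-- `d` is a zag sequence: `d₁ = 0`, `d₂ = 1`, and
`1 ≤ d_{i+1} ≤ d_i + 1` for all `i` (1-indexed as in the paper;
here `d : Fin n → ℕ` is 0-indexed). -/
def IsZag {n : ℕ} (d : Fin n → ℕ) : Prop :=
  (∀ h : 0 < n, d ⟨0, h⟩ = 0) ∧
  (∀ h : 1 < n, d ⟨1, h⟩ = 1) ∧
  (∀ i : ℕ, ∀ h : i + 1 < n,
    1 ≤ d ⟨i + 1, h⟩ ∧ d ⟨i + 1, h⟩ ≤ d ⟨i, Nat.lt_of_succ_lt h⟩ + 1)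

/-- `M(t,t')`: the largest `m` such that the depth sequences of the DFS trees
of the bracketings `t` and `t'` are congruent modulo `m`. -/
noncomputable def Mval (t t' : BTree) : ℕ :=
  sSup {m : ℕ | ∀ i < t.size, t.depth i ≡ t'.depth i [MOD m]}

end AssocSpec

namespace Fin

lemma val_orderSucc {ℓ : ℕ} (i : Fin (ℓ + 1)) :
    ((Order.succ i : Fin (ℓ + 1)) : ℕ) = min ((i : ℕ) + 1) ℓ := by
  induction i using Fin.lastCases <;> simp

lemma val_iterate_orderSucc {ℓ : ℕ} (a : ℕ) (i : Fin (ℓ + 1)) :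
    ((Order.succ^[a] i : Fin (ℓ + 1)) : ℕ) = min ((i : ℕ) + a) ℓ := by
  induction a with
  | zero => simp [i.is_le]
  | succ a ih => rw [Function.iterate_succ_apply', Fin.val_orderSucc, ih]; omega

lemma iterate_orderSucc_eq_iff {ℓ a b : ℕ} :
    (∀ v : Fin (ℓ + 1), Order.succ^[a] v = Order.succ^[b] v) ↔ min a ℓ = min b ℓ := by
  simp only [Fin.ext_iff, Fin.val_iterate_orderSucc]
  exact ⟨fun h => by simpa using h 0, fun h v => by omega⟩

end Fin

lemma Set.ncard_image_eq_ncard_image {α β γ : Type*} {s : Set α} {f : α → β} {g : α → γ}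
    (h : ∀ a ∈ s, ∀ b ∈ s, f a = f b ↔ g a = g b) : (f '' s).ncard = (g '' s).ncard := by
  rcases s.eq_empty_or_nonempty with rfl | ⟨a₀, -⟩
  · simp
  have : Nonempty α := ⟨a₀⟩
  set φ := g ∘ Function.invFunOn f s
  have hφ : ∀ a ∈ s, φ (f a) = g a := fun a ha =>
    (h _ (Function.invFunOn_mem ⟨a, ha, rfl⟩) a ha).1 (Function.invFunOn_eq ⟨a, ha, rfl⟩)
  have himage : φ '' (f '' s) = g '' s := by
    rw [Set.image_image]; exact Set.image_congr hφ
  rw [← himage]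
  refine (Set.InjOn.ncard_image ?_).symm
  rintro _ ⟨a, ha, rfl⟩ _ ⟨b, hb, rfl⟩ hab
  rw [hφ a ha, hφ b hb] at hab
  exact (h a ha b hb).2 hab

namespace AssocSpec

lemma gaOp_eq_some_iff {V : Type*} {E : V → V → Prop} {a b : Option V} {w : V} :
    gaOp E a b = some w ↔ a = some w ∧ ∃ u, b = some u ∧ E w u := by
  rcases a with _ | x <;> rcases b with _ | y <;> simp [gaOp, eq_comm]
  exact ⟨fun ⟨h, e⟩ => ⟨e, e ▸ h⟩, fun ⟨e, h⟩ => ⟨e ▸ h, e⟩⟩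

namespace BTree

lemma one_le_size (t : BTree) : 1 ≤ t.size := by
  induction t with
  | leaf => exact le_rfl
  | node l r _ _ => simp only [size]; omega

lemma length_depths (t : BTree) : t.depths.length = t.size := by
  induction t with
  | leaf => rfl
  | node l r ihl ihr => simp [depths, size, ihl, ihr]

lemma depth_node_left (l r : BTree) {i : ℕ} (h : i < l.size) :
    (node l r).depth i = l.depth i := by
  simp only [depth, depths]
  rw [List.getD_append _ _ _ _ (by rwa [length_depths])]

lemma depth_node_right (l r : BTree) {i : ℕ} (h : i < r.size) :
    (node l r).depth (l.size + i) = r.depth i + 1 := by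
  simp only [depth, depths]
  rw [List.getD_append_right _ _ _ _ (by rw [length_depths]; omega), length_depths,
    Nat.add_sub_cancel_left]
  have hi : i < r.depths.length := by rwa [length_depths]
  simp [List.getD_eq_getElem?_getD, List.getElem?_eq_getElem hi]

lemma depth_zero (t : BTree) : t.depth 0 = 0 := by
  induction t with
  | leaf => rfl
  | node l r ihl _ => rw [depth_node_left l r (one_le_size l), ihl]

lemma depth_node_size_left (l r : BTree) : (node l r).depth l.size = 1 := by
  simpa [depth_zero] using depth_node_right l r (one_le_size r)

lemma one_le_depth (t : BTree) {i : ℕ} (h0 : 0 < i) (h : i < t.size) : 1 ≤ t.depth i := by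
  induction t generalizing i with
  | leaf => simp only [size] at h; omega
  | node l r ihl _ =>
    simp only [size] at h
    rcases lt_or_ge i l.size with hi | hi
    · rw [depth_node_left l r hi]; exact ihl h0 hi
    · obtain ⟨j, rfl⟩ := Nat.exists_eq_add_of_le hi
      rw [depth_node_right l r (by omega)]; omega

lemma depth_succ_le (t : BTree) {i : ℕ} (h : i + 1 < t.size) :
    t.depth (i + 1) ≤ t.depth i + 1 := by
  induction t generalizing i with
  | leaf => simp only [size] at h; omega
  | node l r ihl ihr =>
    simp only [size] at h
    rcases lt_trichotomy (i + 1) l.size with hi | hi | hi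
    · rw [depth_node_left l r hi, depth_node_left l r (by omega)]; exact ihl hi
    · rw [hi, depth_node_size_left]; omega
    · obtain ⟨j, rfl⟩ := Nat.exists_eq_add_of_le (Nat.le_of_lt_succ hi)
      rw [add_assoc, depth_node_right l r (by omega), depth_node_right l r (by omega)]
      exact Nat.add_le_add_right (ihr (by omega)) 1

def appendLeaf : BTree → ℕ → BTree
  | leaf, _ => node leaf leaf
  | node l r, e => if e ≤ 1 then node (node l r) leaf else node l (appendLeaf r (e - 1))

lemma depths_appendLeaf (t : BTree) {e : ℕ} (h1 : 1 ≤ e) (h2 : e ≤ t.depth (t.size - 1) + 1) :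
    (t.appendLeaf e).depths = t.depths ++ [e] := by
  induction t generalizing e with
  | leaf =>
    obtain rfl : e = 1 := by simp [depth, depths, size] at h2; omega
    rfl
  | node l r _ ihr =>
    by_cases he : e ≤ 1
    · obtain rfl : e = 1 := by omega
      rfl
    · have hlast : (node l r).depth ((node l r).size - 1) = r.depth (r.size - 1) + 1 := by
        have := depth_node_right l r (Nat.sub_one_lt_of_lt (one_le_size r))
        rwa [← Nat.add_sub_assoc (one_le_size r)] at this
      simp only [appendLeaf, if_neg he, depths, ihr (by omega : 1 ≤ e - 1) (by omega),
        List.map_append, List.append_assoc, List.map_singleton, Nat.sub_add_cancel h1]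

lemma exists_depth_eq {m : ℕ} (hm : 1 ≤ m) {e : ℕ → ℕ} (h0 : e 0 = 0)
    (hstep : ∀ i, i + 1 < m → 1 ≤ e (i + 1) ∧ e (i + 1) ≤ e i + 1) :
    ∃ t : BTree, t.size = m ∧ ∀ i < m, t.depth i = e i := by
  induction m, hm using Nat.le_induction with
  | base => exact ⟨leaf, rfl, fun i hi => by obtain rfl : i = 0 := (by omega); exact h0.symm⟩
  | succ m hm ih =>
    obtain ⟨t, hsize, hdepth⟩ := ih fun i hi => hstep i (by omega)
    obtain ⟨hpos, hle⟩ := hstep (m - 1) (by omega)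
    rw [Nat.sub_add_cancel hm] at hpos hle
    have hdepths := t.depths_appendLeaf hpos (by rw [hsize, hdepth _ (by omega)]; exact hle)
    refine ⟨t.appendLeaf (e m), ?_, fun i hi => ?_⟩
    · rw [← length_depths, hdepths, List.length_append, length_depths, hsize, List.length_singleton]
    · rw [depth, hdepths]
      rcases Nat.lt_succ_iff_lt_or_eq.1 hi with hi | rfl
      · rw [List.getD_append _ _ _ _ (by rwa [length_depths, hsize])]; exact hdepth i hi
      · rw [List.getD_append_right _ _ _ _ (by rw [length_depths, hsize]), length_depths, hsize,
          Nat.sub_self]; rfl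

section FunctionalGraph

variable {V : Type*} (σ : V → V)

def Follows (t : BTree) (f : ℕ → Option V) (k : ℕ) (v : V) : Prop :=
  ∀ i < t.size, f (k + i) = some (σ^[t.depth i] v)

variable {σ}

lemma follows_node_iff {l r : BTree} {f : ℕ → Option V} {k : ℕ} {v : V} :
    (node l r).Follows σ f k v ↔ l.Follows σ f k v ∧ r.Follows σ f (k + l.size) (σ v) := by
  constructor
  · intro h
    refine ⟨fun i hi => ?_, fun i hi => ?_⟩
    · rw [h i (by simp only [size]; omega), depth_node_left l r hi]
    · rw [add_assoc, h (l.size + i) (by simp only [size]; omega), depth_node_right l r hi,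
        Function.iterate_succ_apply]
  · rintro ⟨hl, hr⟩ i hi
    simp only [size] at hi
    rcases lt_or_ge i l.size with hil | hil
    · rw [hl i hil, depth_node_left l r hil]
    · obtain ⟨j, rfl⟩ := Nat.exists_eq_add_of_le hil
      rw [← add_assoc, hr j (by omega), depth_node_right l r (by omega),
        Function.iterate_succ_apply]

lemma evalFrom_eq_some_iff (t : BTree) (f : ℕ → Option V) (k : ℕ) (v : V) :
    t.evalFrom (gaOp fun x y => y = σ x) f k = some v ↔ t.Follows σ f k v := by
  induction t generalizing k v with
  | leaf => simp [evalFrom, Follows, size, depth, depths]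
  | node l r ihl ihr =>
    simp only [evalFrom, gaOp_eq_some_iff, ihl, ihr, follows_node_iff, exists_eq_right]

theorem termOp_eq_termOp_iff {t t' : BTree} (h : t.size = t'.size) :
    t.termOp (gaOp fun x y => y = σ x) = t'.termOp (gaOp fun x y => y = σ x) ↔
      ∀ i < t.size, ∀ v, σ^[t.depth i] v = σ^[t'.depth i] v := by
  constructor
  · intro heq i hi v
    have hf : t.Follows σ (fun j => some (σ^[t.depth j] v)) 0 v := fun j _ => by rw [zero_add]
    rw [← evalFrom_eq_some_iff, ← termOp, heq, termOp, evalFrom_eq_some_iff] at hf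
    simpa using hf i (h ▸ hi)
  · intro heq
    funext f
    refine Option.ext fun v => ?_
    simp only [termOp, evalFrom_eq_some_iff, Follows, ← h]
    exact forall₂_congr fun i hi => by rw [heq i hi]

end FunctionalGraph

end BTree

lemma pathWithLoop_eq_orderSucc (ℓ : ℕ) :
    (fun i j : Fin (ℓ + 1) => (j : ℕ) = (i : ℕ) + 1 ∨ ((i : ℕ) = ℓ ∧ (j : ℕ) = ℓ)) =
      fun i j => j = Order.succ i := by
  funext i j
  rw [Fin.ext_iff, Fin.val_orderSucc, eq_iff_iff]
  omega

def truncDepths (ℓ n : ℕ) (t : BTree) : Fin n → ℕ := fun i => min (t.depth i) ℓ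

lemma termOp_orderSucc_eq_iff {ℓ n : ℕ} {t t' : BTree} (ht : t.size = n) (ht' : t'.size = n) :
    t.termOp (gaOp fun i j : Fin (ℓ + 1) => j = Order.succ i) =
        t'.termOp (gaOp fun i j : Fin (ℓ + 1) => j = Order.succ i) ↔
      truncDepths ℓ n t = truncDepths ℓ n t' := by
  simp only [BTree.termOp_eq_termOp_iff (ht.trans ht'.symm), Fin.iterate_orderSucc_eq_iff,
    funext_iff, truncDepths, Fin.forall_iff, ht]

lemma isZag_iff {n : ℕ} {d : Fin n → ℕ} :
    IsZag d ↔ (∀ h : 0 < n, d ⟨0, h⟩ = 0) ∧ ∀ i (h : i + 1 < n),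
      1 ≤ d ⟨i + 1, h⟩ ∧ d ⟨i + 1, h⟩ ≤ d ⟨i, Nat.lt_of_succ_lt h⟩ + 1 := by
  refine ⟨fun h => ⟨h.1, h.2.2⟩, fun ⟨h0, hstep⟩ => ⟨h0, fun h => ?_, hstep⟩⟩
  obtain ⟨h1, h2⟩ := hstep 0 h
  rw [h0 (by omega)] at h2
  exact le_antisymm h2 h1

lemma isZag_comp_val_iff {n : ℕ} {e : ℕ → ℕ} :
    IsZag (fun i : Fin n => e i) ↔
      (0 < n → e 0 = 0) ∧ ∀ i, i + 1 < n → 1 ≤ e (i + 1) ∧ e (i + 1) ≤ e i + 1 :=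
  isZag_iff

def natExtend {n : ℕ} (d : Fin n → ℕ) (i : ℕ) : ℕ := if h : i < n then d ⟨i, h⟩ else 0

lemma natExtend_val {n : ℕ} (d : Fin n → ℕ) (i : Fin n) : natExtend d i = d i := dif_pos i.isLt

lemma isZag_iff_natExtend {n : ℕ} {d : Fin n → ℕ} :
    IsZag d ↔ (0 < n → natExtend d 0 = 0) ∧
      ∀ i, i + 1 < n → 1 ≤ natExtend d (i + 1) ∧ natExtend d (i + 1) ≤ natExtend d i + 1 := by
  rw [← isZag_comp_val_iff]
  simp only [natExtend_val]

lemma image_truncDepths {ℓ n : ℕ} (hℓ : 1 ≤ ℓ) (hn : 1 ≤ n) :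
    truncDepths ℓ n '' {t | t.size = n} = {d | IsZag d ∧ ∀ i, d i ≤ ℓ} := by
  ext d
  constructor
  · rintro ⟨t, rfl, rfl⟩
    refine ⟨(isZag_comp_val_iff (e := fun i => min (t.depth i) ℓ)).2
      ⟨fun _ => by simp [BTree.depth_zero], fun i hi => ?_⟩, fun i => min_le_right _ _⟩
    have := t.one_le_depth (by omega : 0 < i + 1) hi
    have := t.depth_succ_le hi
    omega
  · rintro ⟨hd, hbound⟩
    obtain ⟨h0, hstep⟩ := isZag_iff_natExtend.1 hd
    obtain ⟨t, hsize, hdepth⟩ := BTree.exists_depth_eq hn (h0 hn) hstep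
    refine ⟨t, hsize, funext fun i => ?_⟩
    rw [truncDepths, hdepth i i.isLt, natExtend_val, min_eq_left (hbound i)]

theorem spectrum_orderSucc {ℓ n : ℕ} (hℓ : 1 ≤ ℓ) (hn : 1 ≤ n) :
    spectrum (gaOp fun i j : Fin (ℓ + 1) => j = Order.succ i) n =
      {d : Fin n → ℕ | IsZag d ∧ ∀ i, d i ≤ ℓ}.ncard := by
  have hset : {g | ∃ t : BTree, t.size = n ∧
      g = t.termOp (gaOp fun i j : Fin (ℓ + 1) => j = Order.succ i)} =
      BTree.termOp (gaOp fun i j => j = Order.succ i) '' {t | t.size = n} := by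
    ext g; simp [eq_comm]
  rw [spectrum, hset, ← image_truncDepths hℓ hn]
  exact Set.ncard_image_eq_ncard_image fun _ ha _ hb => termOp_orderSucc_eq_iff ha hb

namespace DFSTree

variable {n : ℕ}

@[ext]
lemma ext {T T' : DFSTree n} (h : T.parent = T'.parent) : T = T' := by
  cases T; cases T'; cases h; rfl

variable (T : DFSTree n)

lemma val_parent_le (i : Fin n) : (T.parent i : ℕ) ≤ i - 1 := by
  by_cases h : (i : ℕ) = 0
  · rw [T.parent_root i h, h]
  · have := T.parent_lt i (Nat.pos_of_ne_zero h); omega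

lemma val_iterate_parent_le (a : ℕ) (i : Fin n) : (T.parent^[a] i : ℕ) ≤ i - a := by
  induction a with
  | zero => simp
  | succ a ih =>
    rw [Function.iterate_succ_apply']
    have := T.val_parent_le (T.parent^[a] i)
    omega

lemma val_iterate_depth (i : Fin n) : (T.parent^[T.depth i] i : ℕ) = 0 :=
  Nat.sInf_mem (s := {k | (T.parent^[k] i : ℕ) = 0})
    ⟨i, Nat.le_zero.1 (by simpa using T.val_iterate_parent_le i i)⟩

lemma depth_eq_zero {i : Fin n} (h : (i : ℕ) = 0) : T.depth i = 0 :=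
  Nat.eq_zero_of_le_zero (Nat.sInf_le h)

lemma depth_eq_depth_parent_add_one {i : Fin n} (h : (i : ℕ) ≠ 0) :
    T.depth i = T.depth (T.parent i) + 1 := by
  apply le_antisymm
  · exact Nat.sInf_le (T.val_iterate_depth (T.parent i))
  · have hne : T.depth i ≠ 0 := fun h0 => h (by simpa [h0] using T.val_iterate_depth i)
    obtain ⟨k, hk⟩ := Nat.exists_eq_succ_of_ne_zero hne
    have := T.val_iterate_depth i
    rw [hk, Function.iterate_succ_apply] at this
    have : T.depth (T.parent i) ≤ k := Nat.sInf_le this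
    omega

lemma depth_parent_le (i : Fin n) : T.depth (T.parent i) ≤ T.depth i := by
  by_cases h : (i : ℕ) = 0
  · rw [T.parent_root i h]
  · rw [T.depth_eq_depth_parent_add_one h]; omega

lemma depth_iterate_parent_le (a : ℕ) (j : Fin n) : T.depth (T.parent^[a] j) ≤ T.depth j := by
  induction a with
  | zero => rfl
  | succ a ih => rw [Function.iterate_succ_apply']; exact (T.depth_parent_le _).trans ih

lemma depth_lt_of_iterate_parent_eq {a : ℕ} {i j : Fin n} (h : T.parent^[a] j = i) (hne : i ≠ j) :
    T.depth i < T.depth j := by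
  cases a with
  | zero => exact absurd h.symm hne
  | succ a =>
    by_cases hj : (j : ℕ) = 0
    · exact absurd (h.symm.trans (Function.iterate_fixed (T.parent_root j hj) _)) hne
    · rw [Function.iterate_succ_apply] at h
      rw [T.depth_eq_depth_parent_add_one hj, ← h]
      exact Nat.lt_succ_of_le (T.depth_iterate_parent_le a _)

lemma isZag_depth : IsZag T.depth := by
  refine isZag_iff.2 ⟨fun _ => T.depth_eq_zero rfl, fun i h => ?_⟩
  set k : Fin n := ⟨i + 1, h⟩
  have hk : (k : ℕ) ≠ 0 := Nat.succ_ne_zero i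
  have hpk : (T.parent k : ℕ) ≤ i := T.val_parent_le k
  obtain ⟨a, ha⟩ := T.interval (T.parent k) ⟨i, Nat.lt_of_succ_lt h⟩ k hpk (Nat.le_succ i)
    ⟨1, rfl⟩
  have := T.depth_iterate_parent_le a ⟨i, Nat.lt_of_succ_lt h⟩
  rw [ha] at this
  rw [T.depth_eq_depth_parent_add_one hk]
  omega

end DFSTree

/-- In a DFS tree with depth sequence `e`, the parent of the vertex `k` is the last earlier vertex
of smaller depth. -/
def zagParent (e : ℕ → ℕ) (k : ℕ) : ℕ := Nat.findGreatest (fun j => e j < e k) (k - 1)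

section ZagParent

variable {e : ℕ → ℕ} {k : ℕ}

lemma zagParent_le : zagParent e k ≤ k - 1 := Nat.findGreatest_le _

lemma zagParent_zero : zagParent e 0 = 0 := Nat.findGreatest_zero

lemma apply_zagParent_lt (h : e 0 < e k) : e (zagParent e k) < e k :=
  Nat.findGreatest_spec (P := fun j => e j < e k) (Nat.zero_le _) h

lemma le_apply_of_zagParent_lt {j : ℕ} (h₁ : zagParent e k < j) (h₂ : j ≤ k) : e k ≤ e j := by
  rcases h₂.lt_or_eq with h₂ | rfl
  · exact not_lt.1 (Nat.findGreatest_is_greatest (P := fun j => e j < e k) h₁ (by omega))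
  · rfl

lemma apply_zagParent_add_one (h : e 0 < e k)
    (hstep : e (zagParent e k + 1) ≤ e (zagParent e k) + 1) : e (zagParent e k) + 1 = e k := by
  have hk : zagParent e k < k := by
    have := zagParent_le (e := e) (k := k)
    rcases Nat.eq_zero_or_pos k with rfl | hk
    · exact absurd h (lt_irrefl _)
    · omega
  have := apply_zagParent_lt h
  have := le_apply_of_zagParent_lt (Nat.lt_add_one _) hk
  omega

theorem exists_iterate_zagParent_eq_iff {n : ℕ} (hroot : ∀ k, 0 < k → k < n → e 0 < e k)
    {i : ℕ} (hk : k < n) :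
    (∃ a, (zagParent e)^[a] k = i) ↔ i ≤ k ∧ ∀ j, i < j → j ≤ k → e i < e j := by
  constructor
  · rintro ⟨a, rfl⟩
    induction a generalizing k with
    | zero => exact ⟨le_rfl, fun j h₁ h₂ => absurd h₂ (not_le.2 h₁)⟩
    | succ a ih =>
      rw [Function.iterate_succ_apply]
      have hpk := zagParent_le (e := e) (k := k)
      obtain ⟨hle, hlt⟩ := ih (k := zagParent e k) (by omega)
      refine ⟨by omega, fun j h₁ h₂ => ?_⟩
      rcases le_or_gt j (zagParent e k) with hj | hj
      · exact hlt j h₁ hj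
      · have hanc : e ((zagParent e)^[a] (zagParent e k)) ≤ e (zagParent e k) := by
          rcases hle.eq_or_lt with h | h
          · rw [h]
          · exact (hlt _ h le_rfl).le
        have := apply_zagParent_lt (hroot k (by omega) hk)
        have := le_apply_of_zagParent_lt hj h₂
        omega
  · rintro ⟨hik, habove⟩
    induction k using Nat.strong_induction_on with
    | _ k ih =>
      rcases hik.eq_or_lt with rfl | hik
      · exact ⟨0, rfl⟩
      · have hpk := zagParent_le (e := e) (k := k)
        have hip : i ≤ zagParent e k := by
          by_contra! h
          exact absurd (habove k hik le_rfl) (not_lt.2 (le_apply_of_zagParent_lt h hik.le))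
        obtain ⟨a, ha⟩ := ih _ (by omega) (by omega) hip fun j h₁ h₂ => habove j h₁ (by omega)
        exact ⟨a + 1, by rwa [Function.iterate_succ_apply]⟩

end ZagParent

section OfZag

variable {n : ℕ} {d : Fin n → ℕ}

lemma IsZag.natExtend_zero_lt (hd : IsZag d) {k : ℕ} (h0 : 0 < k) (hk : k < n) :
    natExtend d 0 < natExtend d k := by
  obtain ⟨hroot, hstep⟩ := isZag_iff_natExtend.1 hd
  have := (hstep (k - 1) (by omega)).1
  rw [Nat.sub_add_cancel h0] at this
  rw [hroot (by omega)]
  omega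

variable (d) in
def zagParentFin (i : Fin n) : Fin n :=
  ⟨zagParent (natExtend d) i, lt_of_le_of_lt (zagParent_le.trans (Nat.sub_le _ _)) i.isLt⟩

lemma val_iterate_zagParentFin (a : ℕ) (i : Fin n) :
    ((zagParentFin d)^[a] i : ℕ) = (zagParent (natExtend d))^[a] i :=
  Function.Semiconj.iterate_right (f := Fin.val) (fun _ => rfl) a i

lemma exists_iterate_zagParentFin_eq_iff (hd : IsZag d) {i k : Fin n} :
    (∃ a, (zagParentFin d)^[a] k = i) ↔
      i ≤ k ∧ ∀ j, (i : ℕ) < j → j ≤ k → natExtend d i < natExtend d j := by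
  simp only [Fin.ext_iff, val_iterate_zagParentFin, Fin.le_def]
  exact exists_iterate_zagParent_eq_iff (fun _ => hd.natExtend_zero_lt) k.isLt

end OfZag

namespace DFSTree

variable {n : ℕ}

def ofZag (d : Fin n → ℕ) (hd : IsZag d) : DFSTree n where
  parent := zagParentFin d
  parent_lt i hi := by
    have := zagParent_le (e := natExtend d) (k := i)
    show zagParent _ _ < _
    omega
  parent_root i hi := Fin.ext (by simp [zagParentFin, hi, zagParent_zero])
  interval i j k hij hjk hik := by
    rw [exists_iterate_zagParentFin_eq_iff hd] at hik ⊢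
    exact ⟨hij, fun m h₁ h₂ => hik.2 m h₁ (h₂.trans hjk)⟩

lemma depth_ofZag {d : Fin n → ℕ} (hd : IsZag d) (i : Fin n) : (ofZag d hd).depth i = d i := by
  induction i using WellFoundedLT.induction with
  | _ i ih =>
    obtain ⟨hroot, hstep⟩ := isZag_iff_natExtend.1 hd
    by_cases hi : (i : ℕ) = 0
    · rw [depth_eq_zero _ hi, ← natExtend_val d i, hi, hroot (by omega)]
    · have hlt : (ofZag d hd).parent i < i := (ofZag d hd).parent_lt i (by omega)
      rw [depth_eq_depth_parent_add_one _ hi, ih _ hlt, ← natExtend_val d i,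
        ← natExtend_val d]
      refine apply_zagParent_add_one (hd.natExtend_zero_lt (by omega) i.isLt) (hstep _ ?_).2
      exact Nat.lt_of_le_of_lt hlt i.isLt

lemma ofZag_depth (T : DFSTree n) : ofZag T.depth T.isZag_depth = T := by
  refine ext (funext fun i => Fin.ext ?_)
  show zagParent (natExtend T.depth) i = T.parent i
  by_cases hi : (i : ℕ) = 0
  · rw [T.parent_root i hi, hi, zagParent_zero]
  rw [zagParent, Nat.findGreatest_eq_iff]
  refine ⟨T.val_parent_le i, fun _ => ?_, fun m h₁ h₂ => ?_⟩
  · rw [natExtend_val, natExtend_val, T.depth_eq_depth_parent_add_one hi]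
    exact Nat.lt_add_one _
  · set j : Fin n := ⟨m, by omega⟩
    obtain ⟨a, ha⟩ := T.interval (T.parent i) j i h₁.le (by show m ≤ i; omega) ⟨1, rfl⟩
    have := T.depth_lt_of_iterate_parent_eq ha fun h => ne_of_lt h₁ (congrArg Fin.val h)
    rw [show natExtend T.depth m = T.depth j from natExtend_val _ j, natExtend_val,
      T.depth_eq_depth_parent_add_one hi]
    omega

noncomputable def equivIsZag : DFSTree n ≃ {d : Fin n → ℕ // IsZag d} where
  toFun T := ⟨T.depth, T.isZag_depth⟩
  invFun d := ofZag d.1 d.2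
  left_inv := ofZag_depth
  right_inv d := Subtype.ext (funext (depth_ofZag d.2))

lemma height_le_iff (T : DFSTree n) {h : ℕ} : T.height ≤ h ↔ ∀ i, T.depth i ≤ h := by
  simp [height]

end DFSTree

theorem tcount_eq_ncard (h n : ℕ) :
    tcount h n = {d : Fin n → ℕ | IsZag d ∧ ∀ i, d i ≤ h}.ncard := by
  rw [tcount, ← Nat.card_coe_set_eq]
  exact Nat.card_congr <| (DFSTree.equivIsZag.subtypeEquiv fun T => T.height_le_iff).trans
    (Equiv.subtypeSubtypeEquivSubtypeInter IsZag fun d : Fin n → ℕ => ∀ i, d i ≤ h)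

end AssocSpec

open AssocSpec in
/-- For the directed path `v₀ → v₁ → ⋯ → v_ℓ` of length
`ℓ ≥ 1` with a loop on the last vertex, the associative spectrum of the graph
algebra is `s_n = t_ℓ(n)`, where `t_h(n)` is the number of DFS trees of size
`n` of height at most `h`. -/
theorem stmt5 (ℓ : ℕ) (hℓ : 1 ≤ ℓ) (n : ℕ) (hn : 1 ≤ n) :
    spectrum (gaOp (fun i j : Fin (ℓ + 1) =>
      (j : ℕ) = (i : ℕ) + 1 ∨ ((i : ℕ) = ℓ ∧ (j : ℕ) = ℓ))) n = tcount ℓ n := by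
  rw [pathWithLoop_eq_orderSucc, spectrum_orderSucc hℓ hn, tcount_eq_ncard]
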